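/- arXiv:1011.4611 — 3 statements merged into one kernel-verified Lean document; each statement's English description precedes it below -/
import Mathlib

section
/- Let n ≥ 2 and let Z ⊂ ℙ_n be a finite non-degenerate set of points such that no nonzero homogeneous quadratic form in k[z₀,…,z_n] vanishes on all points of Z. Then Z is not contained in any Kronecker–Weierstrass variety of ℙ_n. -/
noncomputable section

open scoped BigOperators

/-- The set of points of `ℙ_n = ℙ(k^{n+1})` lying in the projectivization of the
linear subspace `W ⊆ k^{n+1}`. -/
def projSet (k : Type*) [Field k] {n : ℕ} (W : Submodule k (Fin (n + 1) → k)) :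
    Set (Projectivization k (Fin (n + 1) → k)) :=
  {x | x.rep ∈ W}

/-- `C ⊆ ℙ_n` is a rational normal curve of degree `d`, spanning the `d`-dimensional
linear subspace of `ℙ_n` given by the `(d+1)`-dimensional subspace `L ⊆ k^{n+1}`:
namely, `C` is the image of the degree-`d` Veronese map `ℙ¹ → ℙ_n` composed with an
injective linear map `A : k^{d+1} → k^{n+1}`, and `L = im A`. -/
def IsRNC (k : Type*) [Field k] (n d : ℕ)
    (C : Set (Projectivization k (Fin (n + 1) → k)))
    (L : Submodule k (Fin (n + 1) → k)) : Prop :=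
  ∃ A : (Fin (d + 1) → k) →ₗ[k] (Fin (n + 1) → k), Function.Injective A ∧
    L = LinearMap.range A ∧
    C = {x | ∃ s t c : k, c ≠ 0 ∧
          c • x.rep = A fun i => s ^ (d - (i : ℕ)) * t ^ (i : ℕ)}

/-- `Y ⊆ ℙ_n` is a Kronecker–Weierstrass variety of type `(d;s)` with `d ≥ 1` and
curve part `C`: there are integers `n₁, …, n_s` with `1 ≤ nᵢ ≤ n - 1` and
`d + n₁ + ⋯ + n_s = n`, a rational normal curve `C` of degree `d` spanning a
`d`-dimensional linear subspace `L`, and linear subspaces `Lᵢ` of dimension `nᵢ`,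
such that each `L ∩ Lᵢ` is a single point lying on `C`, the `Lᵢ` are pairwise
disjoint, and `Y = C ∪ L₁ ∪ ⋯ ∪ L_s`. -/
def IsKWpos (k : Type*) [Field k] (n d s : ℕ)
    (Y C : Set (Projectivization k (Fin (n + 1) → k))) : Prop :=
  1 ≤ d ∧
  ∃ (nn : Fin s → ℕ) (L : Submodule k (Fin (n + 1) → k))
    (W : Fin s → Submodule k (Fin (n + 1) → k)),
    (∀ i, 1 ≤ nn i ∧ nn i ≤ n - 1) ∧ (d + ∑ i, nn i = n) ∧
    IsRNC k n d C L ∧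
    (∀ i, Module.finrank k (W i) = nn i + 1) ∧
    (∀ i, ∃ p ∈ C, projSet k L ∩ projSet k (W i) = {p}) ∧
    (∀ i j, i ≠ j → projSet k (W i) ∩ projSet k (W j) = ∅) ∧
    Y = C ∪ ⋃ i, projSet k (W i)

/-- `Y ⊆ ℙ_n` is a Kronecker–Weierstrass variety of type `(0;s)` with distinguished
point `y`: there are integers `n₁, …, n_s` with `1 ≤ nᵢ ≤ n - 1` and
`n₁ + ⋯ + n_s = n`, and linear subspaces `Lᵢ` of dimension `nᵢ`, all passing
through `y`, any two of which meet exactly at `y`, with `Y = L₁ ∪ ⋯ ∪ L_s`. -/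
def IsKW0 (k : Type*) [Field k] (n s : ℕ)
    (Y : Set (Projectivization k (Fin (n + 1) → k)))
    (y : Projectivization k (Fin (n + 1) → k)) : Prop :=
  ∃ (nn : Fin s → ℕ) (W : Fin s → Submodule k (Fin (n + 1) → k)),
    (∀ i, 1 ≤ nn i ∧ nn i ≤ n - 1) ∧ (∑ i, nn i = n) ∧
    (∀ i, Module.finrank k (W i) = nn i + 1) ∧
    (∀ i, y ∈ projSet k (W i)) ∧
    (∀ i j, i ≠ j → projSet k (W i) ∩ projSet k (W j) = {y}) ∧
    Y = ⋃ i, projSet k (W i)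

/-- A set of points of `ℙ_n` is non-degenerate if it is not contained in any
hyperplane, i.e. no nonzero linear functional vanishes on (representatives of)
all its points. -/
def NonDegenerate (k : Type*) [Field k] (n : ℕ)
    (Z : Set (Projectivization k (Fin (n + 1) → k))) : Prop :=
  ∀ f : Module.Dual k (Fin (n + 1) → k), (∀ x ∈ Z, f x.rep = 0) → f = 0



namespace KWAux

open Module MvPolynomial

variable {k : Type*} [Field k] {n : ℕ}

/-- The linear polynomial attached to a dual functional. -/
def linPoly (f : Module.Dual k (Fin (n + 1) → k)) : MvPolynomial (Fin (n + 1)) k :=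
  ∑ i, MvPolynomial.C (f fun j => if i = j then 1 else 0) * MvPolynomial.X i

lemma linPoly_eval (f : Module.Dual k (Fin (n + 1) → k)) (v : Fin (n + 1) → k) :
    MvPolynomial.eval v (linPoly f) = f v := by
  rw [linPoly, map_sum, LinearMap.pi_apply_eq_sum_univ f v]
  refine Finset.sum_congr rfl fun i _ => ?_
  simp [mul_comm]

lemma linPoly_homog (f : Module.Dual k (Fin (n + 1) → k)) :
    (linPoly f).IsHomogeneous 1 := by
  refine MvPolynomial.IsHomogeneous.sum _ _ _ fun i _ => ?_
  exact (MvPolynomial.isHomogeneous_X k i).C_mul _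

lemma linPoly_ne_zero {f : Module.Dual k (Fin (n + 1) → k)} (hf : f ≠ 0) :
    linPoly f ≠ 0 := by
  intro h
  apply hf
  refine LinearMap.ext fun v => ?_
  have := linPoly_eval f v
  rw [h, map_zero] at this
  simp [← this]

lemma exists_dual_of_finrank_le (U : Submodule k (Fin (n + 1) → k))
    (h : Module.finrank k U ≤ n) :
    ∃ f : Module.Dual k (Fin (n + 1) → k), f ≠ 0 ∧ ∀ v ∈ U, f v = 0 := by
  have hU : U < ⊤ := by
    rcases eq_or_lt_of_le (le_top : U ≤ ⊤) with hEq | hlt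
    · exfalso
      rw [hEq] at h
      rw [finrank_top, Module.finrank_fin_fun] at h
      omega
    · exact hlt
  obtain ⟨f, hf, hmap⟩ := U.exists_dual_map_eq_bot_of_lt_top hU inferInstance
  refine ⟨f, hf, fun v hv => ?_⟩
  have : f v ∈ U.map f := Submodule.mem_map_of_mem hv
  rwa [hmap, Submodule.mem_bot] at this

lemma finrank_sup_bound {V : Type*} [AddCommGroup V] [Module k V] [FiniteDimensional k V]
    {ι : Type*} [DecidableEq ι] (L : Submodule k V) (nn : ι → ℕ) (W : ι → Submodule k V)
    (T : Finset ι) (hd : ∀ i ∈ T, Module.finrank k (W i) ≤ nn i + 1)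
    (h : ∀ i ∈ T, ∃ v, v ∈ L ⊓ W i ∧ v ≠ 0) :
    Module.finrank k ↥(L ⊔ T.sup W) ≤ Module.finrank k L + ∑ i ∈ T, nn i := by
  induction T using Finset.induction_on with
  | empty => rw [Finset.sup_empty, sup_bot_eq]; simp
  | @insert a T haT ih =>
    have hdW := hd a (Finset.mem_insert_self a T)
    obtain ⟨v, hvmem, hvne⟩ := h a (Finset.mem_insert_self a T)
    have ih' := ih (fun i hi => hd i (Finset.mem_insert_of_mem hi))
      (fun i hi => h i (Finset.mem_insert_of_mem hi))
    rw [Finset.sup_insert]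
    have hre : L ⊔ (W a ⊔ T.sup W) = (L ⊔ T.sup W) ⊔ W a := by
      rw [sup_comm (W a) (T.sup W), ← sup_assoc]
    rw [hre]
    have key := Submodule.finrank_sup_add_finrank_inf_eq (L ⊔ T.sup W) (W a)
    have hpos : 0 < Module.finrank k ↥((L ⊔ T.sup W) ⊓ W a) := by
      rw [Module.finrank_pos_iff]
      refine ⟨⟨⟨v, ?_⟩, 0, ?_⟩⟩
      · exact ⟨le_sup_left (α := Submodule k V) hvmem.1, hvmem.2⟩
      · simp [Subtype.ext_iff, hvne]
    rw [Finset.sum_insert haT]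
    omega
end KWAux

/-- Let `n ≥ 2` and let `Z ⊂ ℙ_n` be a finite non-degenerate set
of points such that no nonzero homogeneous quadratic form in `k[z₀,…,z_n]` vanishes
on all points of `Z`. Then `Z` is not contained in any Kronecker–Weierstrass variety
of `ℙ_n`. -/
theorem statement5 (k : Type*) [Field k] [IsAlgClosed k] (n : ℕ) (hn : 2 ≤ n)
    (Z : Set (Projectivization k (Fin (n + 1) → k))) (hfin : Z.Finite)
    (hnd : NonDegenerate k n Z)
    (hq : ∀ q : MvPolynomial (Fin (n + 1)) k, q.IsHomogeneous 2 →
      (∀ x ∈ Z, MvPolynomial.eval x.rep q = 0) → q = 0) :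
    ¬∃ (d s : ℕ) (Y : Set (Projectivization k (Fin (n + 1) → k))),
        ((∃ C, IsKWpos k n d s Y C) ∨ (d = 0 ∧ ∃ y, IsKW0 k n s Y y)) ∧ Z ⊆ Y := by
  rintro ⟨d, s, Y, hY, hZY⟩
  classical
  -- a product of two nonzero linear forms, each vanishing on part of Z, contradicts hq
  have hquad : ∀ f g : Module.Dual k (Fin (n + 1) → k), f ≠ 0 → g ≠ 0 →
      (∀ x ∈ Z, f x.rep = 0 ∨ g x.rep = 0) → False := by
    intro f g hf hg hv
    have hhom : (KWAux.linPoly f * KWAux.linPoly g).IsHomogeneous 2 :=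
      (KWAux.linPoly_homog f).mul (KWAux.linPoly_homog g)
    have hQ := hq (KWAux.linPoly f * KWAux.linPoly g) hhom (fun x hx => by
      rw [map_mul, KWAux.linPoly_eval, KWAux.linPoly_eval]
      rcases hv x hx with h | h <;> simp [h])
    exact mul_ne_zero (KWAux.linPoly_ne_zero hf) (KWAux.linPoly_ne_zero hg) hQ
  rcases hY with ⟨C, hKW⟩ | ⟨hd0, y, hKW⟩
  · -- positive-dimensional curve part
    unfold IsKWpos at hKW
    obtain ⟨hd1, nn, L, W, hnn, hsum, hRNC, hWrank, hmeet, hdisj, hYeq⟩ := hKW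
    unfold IsRNC at hRNC
    obtain ⟨A, hAinj, hL, hC⟩ := hRNC
    have hCL : ∀ x ∈ C, x.rep ∈ L := by
      intro x hx
      rw [hC] at hx
      obtain ⟨sc, t, c, hc, hrep⟩ := hx
      have h1 : c • x.rep ∈ L := by
        rw [hrep, hL]; exact LinearMap.mem_range_self _ _
      have h2 := L.smul_mem c⁻¹ h1
      rwa [smul_smul, inv_mul_cancel₀ hc, one_smul] at h2
    rcases Nat.eq_zero_or_pos s with hs | hs
    · -- s = 0 : Y is a rational normal curve of degree n
      subst hs
      have hdn : n = d := by simpa using hsum.symm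
      subst hdn
      have E := A.linearEquivOfInjective hAinj rfl
      set E := A.linearEquivOfInjective hAinj rfl with hEdef
      have hEA : ∀ w, E w = A w := fun w =>
        LinearMap.linearEquivOfInjective_apply hAinj rfl w
      set lam : Fin (n + 1) → Module.Dual k (Fin (n + 1) → k) :=
        fun j => (LinearMap.proj j).comp E.symm.toLinearMap with hlamdef
      have hlamA : ∀ (w : Fin (n + 1) → k) (j : Fin (n + 1)), lam j (A w) = w j := by
        intro w j
        show (E.symm (A w)) j = w j
        rw [← hEA, E.symm_apply_apply]
      set j0 : Fin (n + 1) := ⟨0, by omega⟩ with hj0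
      set j1 : Fin (n + 1) := ⟨1, by omega⟩ with hj1
      set j2 : Fin (n + 1) := ⟨2, by omega⟩ with hj2
      set Q : MvPolynomial (Fin (n + 1)) k :=
        KWAux.linPoly (lam j0) * KWAux.linPoly (lam j2) -
          KWAux.linPoly (lam j1) * KWAux.linPoly (lam j1) with hQdef
      have hQeval : ∀ v : Fin (n + 1) → k,
          MvPolynomial.eval v Q = lam j0 v * lam j2 v - lam j1 v * lam j1 v := by
        intro v
        rw [hQdef, map_sub, map_mul, map_mul, KWAux.linPoly_eval, KWAux.linPoly_eval,
          KWAux.linPoly_eval]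
      have hhom : Q.IsHomogeneous 2 :=
        ((KWAux.linPoly_homog (lam j0)).mul (KWAux.linPoly_homog (lam j2))).sub
          ((KWAux.linPoly_homog (lam j1)).mul (KWAux.linPoly_homog (lam j1)))
      have hvan : ∀ x ∈ Z, MvPolynomial.eval x.rep Q = 0 := by
        intro x hx
        have hxY := hZY hx
        rw [hYeq] at hxY
        have hxC : x ∈ C := by
          rcases hxY with h | h
          · exact h
          · simp at h
        rw [hC] at hxC
        obtain ⟨sc, t, c, hc, hrep⟩ := hxC
        have h0 : ∀ j : Fin (n + 1), c * lam j x.rep = sc ^ (n - (j : ℕ)) * t ^ (j : ℕ) := by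
          intro j
          have h1 := congrArg (lam j) hrep
          simp only [map_smul, smul_eq_mul, hlamA] at h1
          exact h1
        have key : (c * lam j0 x.rep) * (c * lam j2 x.rep)
            = (c * lam j1 x.rep) * (c * lam j1 x.rep) := by
          rw [h0 j0, h0 j1, h0 j2]
          show (sc ^ (n - 0) * t ^ 0) * (sc ^ (n - 2) * t ^ 2)
            = (sc ^ (n - 1) * t ^ 1) * (sc ^ (n - 1) * t ^ 1)
          have hexp : (n - 0) + (n - 2) = (n - 1) + (n - 1) := by omega
          calc (sc ^ (n - 0) * t ^ 0) * (sc ^ (n - 2) * t ^ 2)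
              = sc ^ ((n - 0) + (n - 2)) * t ^ 2 := by rw [pow_add]; ring
            _ = sc ^ ((n - 1) + (n - 1)) * t ^ 2 := by rw [hexp]
            _ = (sc ^ (n - 1) * t ^ 1) * (sc ^ (n - 1) * t ^ 1) := by rw [pow_add]; ring
        have key2 : (c * c) * (lam j0 x.rep * lam j2 x.rep)
            = (c * c) * (lam j1 x.rep * lam j1 x.rep) := by linear_combination key
        have hfin2 := mul_left_cancel₀ (mul_ne_zero hc hc) key2
        rw [hQeval, hfin2, sub_self]
      have hQ0 := hq Q hhom hvan
      have hne01 : j0 ≠ j1 := by simp [hj0, hj1, Fin.ext_iff]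
      have hne21 : j2 ≠ j1 := by simp [hj2, hj1, Fin.ext_iff]
      have hv : MvPolynomial.eval (A (Pi.single j1 1)) Q = -1 := by
        rw [hQeval, hlamA, hlamA, hlamA, Pi.single_eq_same,
          Pi.single_eq_of_ne hne01, Pi.single_eq_of_ne hne21]
        ring
      rw [hQ0] at hv
      simp at hv
    · -- s ≥ 1 : product of two linear forms
      set j0 : Fin s := ⟨0, hs⟩ with hj0
      set T : Finset (Fin s) := Finset.univ.erase j0 with hT
      have hLrank : Module.finrank k ↥L ≤ d + 1 := by
        rw [hL, LinearMap.finrank_range_of_inj hAinj, Module.finrank_fin_fun]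
      have hbound := KWAux.finrank_sup_bound L nn W T
        (fun i _ => le_of_eq (hWrank i))
        (fun i _ => by
          obtain ⟨p, hpC, hpeq⟩ := hmeet i
          have hp : p ∈ projSet k L ∩ projSet k (W i) := by
            rw [hpeq]; rfl
          exact ⟨p.rep, ⟨hp.1, hp.2⟩, p.rep_nonzero⟩)
      have hTsum : nn j0 + ∑ i ∈ T, nn i = ∑ i, nn i :=
        Finset.add_sum_erase _ nn (Finset.mem_univ j0)
      have hUle : Module.finrank k ↥(L ⊔ T.sup W) ≤ n := by
        have h1 := (hnn j0).1
        omega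
      obtain ⟨f, hf, hfv⟩ := KWAux.exists_dual_of_finrank_le _ hUle
      obtain ⟨g, hg, hgv⟩ := KWAux.exists_dual_of_finrank_le (W j0) (by
        rw [hWrank j0]
        have h2 := (hnn j0).2
        omega)
      refine hquad f g hf hg fun x hx => ?_
      have hxY := hZY hx
      rw [hYeq] at hxY
      rcases hxY with hxC | hxU
      · exact Or.inl (hfv _ ((le_sup_left : L ≤ L ⊔ T.sup W) (hCL x hxC)))
      · obtain ⟨i, hxi⟩ := Set.mem_iUnion.mp hxU
        have hxi' : x.rep ∈ W i := hxi
        by_cases hij : i = j0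
        · exact Or.inr (hgv _ (hij ▸ hxi'))
        · refine Or.inl (hfv _ ?_)
          have hWle : W i ≤ L ⊔ T.sup W :=
            le_trans (Finset.le_sup (Finset.mem_erase.mpr ⟨hij, Finset.mem_univ i⟩))
              le_sup_right
          exact hWle hxi'
  · -- d = 0 : union of linear subspaces through a common point
    unfold IsKW0 at hKW
    obtain ⟨nn, W, hnn, hsum, hWrank, hyW, hpair, hYeq⟩ := hKW
    rcases Nat.eq_zero_or_pos s with hs | hs
    · subst hs
      simp at hsum
      omega
    set j0 : Fin s := ⟨0, hs⟩ with hj0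
    set T : Finset (Fin s) := Finset.univ.erase j0 with hT
    set L0 : Submodule k (Fin (n + 1) → k) := Submodule.span k {y.rep} with hL0def
    have hL0rank : Module.finrank k ↥L0 = 1 := finrank_span_singleton y.rep_nonzero
    have hbound := KWAux.finrank_sup_bound L0 nn W T
      (fun i _ => le_of_eq (hWrank i))
      (fun i _ => ⟨y.rep, ⟨Submodule.mem_span_singleton_self _, hyW i⟩, y.rep_nonzero⟩)
    have hTsum : nn j0 + ∑ i ∈ T, nn i = ∑ i, nn i :=
      Finset.add_sum_erase _ nn (Finset.mem_univ j0)
    have hUle : Module.finrank k ↥(L0 ⊔ T.sup W) ≤ n := by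
      have h1 := (hnn j0).1
      omega
    obtain ⟨g, hg, hgv⟩ := KWAux.exists_dual_of_finrank_le _ hUle
    obtain ⟨f, hf, hfv⟩ := KWAux.exists_dual_of_finrank_le (W j0) (by
      rw [hWrank j0]
      have h2 := (hnn j0).2
      omega)
    refine hquad f g hf hg fun x hx => ?_
    have hxY := hZY hx
    rw [hYeq] at hxY
    obtain ⟨i, hxi⟩ := Set.mem_iUnion.mp hxY
    have hxi' : x.rep ∈ W i := hxi
    by_cases hij : i = j0
    · exact Or.inl (hfv _ (hij ▸ hxi'))
    · refine Or.inr (hgv _ ?_)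
      have hWle : W i ≤ L0 ⊔ T.sup W :=
        le_trans (Finset.le_sup (Finset.mem_erase.mpr ⟨hij, Finset.mem_univ i⟩))
          le_sup_right
      exact hWle hxi'
end
end

section
/- Let n ≥ 2 and let Y ⊂ ℙ_n be a Kronecker–Weierstrass variety of type (d;s) with s ≥ 1. Then every subset of Y consisting of points in general linear position has at most n+2 elements. -/
noncomputable section

open scoped BigOperators

/-- A set of points of `ℙ_n` is in general linear position if representative vectors
of any at most `n + 1` distinct points of it are linearly independent over `k`. -/
def InGenLinPos (k : Type*) [Field k] (n : ℕ)
    (Z : Set (Projectivization k (Fin (n + 1) → k))) : Prop :=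
  ∀ (m : ℕ) (f : Fin m → Projectivization k (Fin (n + 1) → k)),
    m ≤ n + 1 → Function.Injective f → (∀ i, f i ∈ Z) →
    LinearIndependent k fun i => (f i).rep

/-! The variety lies on two proper linear subspaces of `ℙ_n`: one linear component `L_{i₀}`, and
the span `V` of the curve (or of the distinguished point) together with the other components.
Each of those components meets the span of the curve, so `V` is small: the vector-space
dimensions of `V` and `L_{i₀}` add up to at most `n + 2`. A set in general linear position has at
most `dim U` points on `ℙ(U)` when `dim U ≤ n`. -/

open Module

section Dimension

variable {K E : Type*} [Field K] [AddCommGroup E] [Module K E] [FiniteDimensional K E]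

lemma finrank_sup_biSup_add_card_le (B : Submodule K E) {ι : Type*} (W : ι → Submodule K E)
    (J : Finset ι) (hmeet : ∀ i ∈ J, B ⊓ W i ≠ ⊥) :
    finrank K ↥(B ⊔ ⨆ i ∈ J, W i) + J.card ≤
      finrank K B + ∑ i ∈ J, finrank K (W i) := by
  classical
  induction J using Finset.induction_on with
  | empty => rw [show B ⊔ ⨆ i ∈ (∅ : Finset ι), W i = B by simp]; simp
  | @insert a J ha ih =>
    have ih := ih fun i hi => hmeet i (Finset.mem_insert_of_mem hi)
    set X := ⨆ i ∈ J, W i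
    have hinf : 1 ≤ finrank K ↥((B ⊔ X) ⊓ W a) := by
      refine Submodule.one_le_finrank_iff.2 <|
        ne_bot_of_le_ne_bot (hmeet a (J.mem_insert_self a)) (inf_le_inf_right _ le_sup_left)
    have hsup := Submodule.finrank_sup_add_finrank_inf_eq (B ⊔ X) (W a)
    have hinsert : B ⊔ ⨆ i ∈ insert a J, W i = (B ⊔ X) ⊔ W a := by
      rw [Finset.iSup_insert, sup_left_comm, sup_comm (W a)]
    rw [hinsert, Finset.sum_insert ha, Finset.card_insert_of_notMem ha]
    omega

end Dimension

section Projective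

variable {k : Type*} [Field k] {n : ℕ}

lemma projSet_mono {V W : Submodule k (Fin (n + 1) → k)} (h : V ≤ W) :
    projSet k V ⊆ projSet k W :=
  fun _ hx => h hx

lemma inf_ne_bot_of_mem_projSet {V W : Submodule k (Fin (n + 1) → k)}
    {x : Projectivization k (Fin (n + 1) → k)} (hV : x ∈ projSet k V) (hW : x ∈ projSet k W) :
    V ⊓ W ≠ ⊥ :=
  (Submodule.ne_bot_iff _).2 ⟨x.rep, ⟨hV, hW⟩, x.rep_nonzero⟩

lemma IsRNC.finrank_eq {d : ℕ} {C : Set (Projectivization k (Fin (n + 1) → k))}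
    {L : Submodule k (Fin (n + 1) → k)} (h : IsRNC k n d C L) : finrank k L = d + 1 := by
  obtain ⟨A, hA, rfl, -⟩ := h
  rw [LinearMap.finrank_range_of_inj hA, finrank_fin_fun]

lemma IsRNC.subset_projSet {d : ℕ} {C : Set (Projectivization k (Fin (n + 1) → k))}
    {L : Submodule k (Fin (n + 1) → k)} (h : IsRNC k n d C L) : C ⊆ projSet k L := by
  obtain ⟨A, -, rfl, rfl⟩ := h
  rintro x ⟨a, b, c, hc, hx⟩
  refine ⟨c⁻¹ • fun i : Fin (d + 1) => a ^ (d - (i : ℕ)) * b ^ (i : ℕ), ?_⟩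
  rw [map_smul, ← hx, smul_smul, inv_mul_cancel₀ hc, one_smul]

/-- The linear data of a Kronecker–Weierstrass variety: `B` is the span of its curve, or of its
distinguished point when `d = 0`, and the `W i` are its linear components. -/
def IsKWCover (k : Type*) [Field k] (n s : ℕ) (Y : Set (Projectivization k (Fin (n + 1) → k))) :
    Prop :=
  ∃ (B : Submodule k (Fin (n + 1) → k)) (W : Fin s → Submodule k (Fin (n + 1) → k)),
    (∀ i, B ⊓ W i ≠ ⊥) ∧ (∀ i, 2 ≤ finrank k (W i) ∧ finrank k (W i) ≤ n) ∧
    finrank k B + ∑ i, finrank k (W i) ≤ n + 1 + s ∧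
    Y ⊆ projSet k B ∪ ⋃ i, projSet k (W i)

namespace InGenLinPos

variable {S : Set (Projectivization k (Fin (n + 1) → k))}

lemma ncard_le_finrank (hgen : InGenLinPos k n S) {V : Submodule k (Fin (n + 1) → k)}
    {t : Set (Projectivization k (Fin (n + 1) → k))} (ht : t.Finite)
    (hts : t ⊆ S ∩ projSet k V) (hcard : t.ncard ≤ n + 1) : t.ncard ≤ finrank k V := by
  have := ht.to_subtype
  let e := (Finite.equivFin t).symm
  have hli : LinearIndependent k fun i => (e i).1.rep := by
    refine hgen _ (fun i => (e i).1) ?_ (Subtype.val_injective.comp e.injective)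
      fun i => (hts (e i).2).1
    rwa [Nat.card_coe_set_eq]
  calc t.ncard
      = finrank k (Submodule.span k (Set.range fun i => (e i).1.rep)) := by
        rw [finrank_span_eq_card hli, Fintype.card_fin, Nat.card_coe_set_eq]
    _ ≤ finrank k V :=
        Submodule.finrank_mono <|
          Submodule.span_le.2 (Set.range_subset_iff.2 fun i => (hts (e i).2).2)

lemma finite_inter_projSet_and_ncard_le (hgen : InGenLinPos k n S)
    {V : Submodule k (Fin (n + 1) → k)} (hV : finrank k V ≤ n) :
    (S ∩ projSet k V).Finite ∧ (S ∩ projSet k V).ncard ≤ finrank k V := by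
  have hsmall : ∀ t ⊆ S ∩ projSet k V, t.Finite → t.ncard ≠ finrank k V + 1 := by
    intro t hts ht hcard
    have := hgen.ncard_le_finrank ht hts (by omega)
    omega
  have hfin : (S ∩ projSet k V).Finite := by
    by_contra hinf
    obtain ⟨t, hts, ht, hcard⟩ := Set.Infinite.exists_subset_ncard_eq hinf (finrank k V + 1)
    exact hsmall t hts ht hcard
  refine ⟨hfin, not_lt.1 fun hlt => ?_⟩
  obtain ⟨t, hts, hcard⟩ := Set.exists_subset_card_eq hlt
  exact hsmall t hts (hfin.subset hts) hcard

lemma finite_and_ncard_le_of_subset_union (hgen : InGenLinPos k n S)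
    {V V' : Submodule k (Fin (n + 1) → k)} (hV : finrank k V ≤ n) (hV' : finrank k V' ≤ n)
    (hS : S ⊆ projSet k V ∪ projSet k V') :
    S.Finite ∧ S.ncard ≤ finrank k V + finrank k V' := by
  obtain ⟨hfin, hcard⟩ := hgen.finite_inter_projSet_and_ncard_le hV
  obtain ⟨hfin', hcard'⟩ := hgen.finite_inter_projSet_and_ncard_le hV'
  have hsplit : S = (S ∩ projSet k V) ∪ (S ∩ projSet k V') := by
    rw [← Set.inter_union_distrib_left, Set.inter_eq_self_of_subset_left hS]
  refine ⟨hsplit ▸ hfin.union hfin', ?_⟩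
  calc S.ncard ≤ (S ∩ projSet k V).ncard + (S ∩ projSet k V').ncard :=
        (congrArg Set.ncard hsplit).trans_le (Set.ncard_union_le _ _)
    _ ≤ finrank k V + finrank k V' := add_le_add hcard hcard'

lemma finite_and_ncard_le_of_isKWCover (hgen : InGenLinPos k n S) {s : ℕ} (hs : 1 ≤ s)
    {Y : Set (Projectivization k (Fin (n + 1) → k))} (hY : IsKWCover k n s Y) (hSY : S ⊆ Y) :
    S.Finite ∧ S.ncard ≤ n + 2 := by
  obtain ⟨B, W, hmeet, hW, hdim, hYcov⟩ := hY
  let i₀ : Fin s := ⟨0, hs⟩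
  let J := Finset.univ.erase i₀
  have hV := finrank_sup_biSup_add_card_le B W J fun i _ => hmeet i
  have hJ : J.card = s - 1 := by simp [J]
  have hsum : ∑ i ∈ J, finrank k (W i) + finrank k (W i₀) = ∑ i, finrank k (W i) :=
    Finset.sum_erase_add _ _ (Finset.mem_univ i₀)
  have hcov : S ⊆ projSet k (B ⊔ ⨆ i ∈ J, W i) ∪ projSet k (W i₀) := by
    intro x hx
    rcases hYcov (hSY hx) with hxB | hxW
    · exact Or.inl (projSet_mono le_sup_left hxB)
    · obtain ⟨i, hxi⟩ := Set.mem_iUnion.1 hxW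
      by_cases hi : i = i₀
      · exact Or.inr (hi ▸ hxi)
      · exact Or.inl (projSet_mono (le_sup_of_le_right (le_biSup W (by simp [J, hi]))) hxi)
  have hW₀ := hW i₀
  obtain ⟨hfin, hcard⟩ := hgen.finite_and_ncard_le_of_subset_union (by omega) hW₀.2 hcov
  exact ⟨hfin, by omega⟩

end InGenLinPos

lemma IsKWpos.isKWCover {d s : ℕ} {Y C : Set (Projectivization k (Fin (n + 1) → k))}
    (h : IsKWpos k n d s Y C) : IsKWCover k n s Y := by
  obtain ⟨-, nn, L, W, hnn, hsum, hC, hdim, hpt, -, rfl⟩ := h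
  refine ⟨L, W, fun i => ?_, fun i => ?_, ?_, Set.union_subset_union_left _ hC.subset_projSet⟩
  · obtain ⟨p, -, hp⟩ := hpt i
    have hp' : p ∈ projSet k L ∩ projSet k (W i) := hp ▸ rfl
    exact inf_ne_bot_of_mem_projSet hp'.1 hp'.2
  · rw [hdim i]
    have := hnn i
    omega
  · simp only [hC.finrank_eq, hdim, Finset.sum_add_distrib, Finset.sum_const, Finset.card_univ,
      Fintype.card_fin, smul_eq_mul, mul_one]
    omega

lemma IsKW0.isKWCover {s : ℕ} {Y : Set (Projectivization k (Fin (n + 1) → k))}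
    {y : Projectivization k (Fin (n + 1) → k)} (h : IsKW0 k n s Y y) : IsKWCover k n s Y := by
  obtain ⟨nn, W, hnn, hsum, hdim, hy, -, rfl⟩ := h
  refine ⟨Submodule.span k {y.rep}, W,
    fun i => inf_ne_bot_of_mem_projSet (Submodule.mem_span_singleton_self y.rep) (hy i),
    fun i => ?_, ?_, Set.subset_union_right⟩
  · rw [hdim i]
    have := hnn i
    omega
  · simp only [finrank_span_singleton y.rep_nonzero, hdim, Finset.sum_add_distrib,
      Finset.sum_const, Finset.card_univ, Fintype.card_fin, smul_eq_mul, mul_one]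
    omega

end Projective

theorem statement6_general (k : Type*) [Field k] (n : ℕ)
    (d s : ℕ) (hs : 1 ≤ s) (Y : Set (Projectivization k (Fin (n + 1) → k)))
    (hY : (∃ C, IsKWpos k n d s Y C) ∨ (d = 0 ∧ ∃ y, IsKW0 k n s Y y))
    (S : Set (Projectivization k (Fin (n + 1) → k)))
    (hSY : S ⊆ Y) (hgen : InGenLinPos k n S) :
    S.Finite ∧ S.ncard ≤ n + 2 := by
  have hcover : IsKWCover k n s Y := by
    rcases hY with ⟨C, hC⟩ | ⟨-, y, hy⟩
    exacts [hC.isKWCover, hy.isKWCover]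
  exact hgen.finite_and_ncard_le_of_isKWCover hs hcover hSY

/-- Let `n ≥ 2` and let `Y ⊆ ℙ_n` be a Kronecker–Weierstrass
variety of type `(d;s)` with `s ≥ 1`. Then every subset of `Y` consisting of points
in general linear position has at most `n + 2` elements. -/
theorem statement6 (k : Type*) [Field k] [IsAlgClosed k] (n : ℕ) (hn : 2 ≤ n)
    (d s : ℕ) (hs : 1 ≤ s) (Y : Set (Projectivization k (Fin (n + 1) → k)))
    (hY : (∃ C, IsKWpos k n d s Y C) ∨ (d = 0 ∧ ∃ y, IsKW0 k n s Y y))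
    (S : Set (Projectivization k (Fin (n + 1) → k)))
    (hSY : S ⊆ Y) (hgen : InGenLinPos k n S) :
    S.Finite ∧ S.ncard ≤ n + 2 :=
  statement6_general k n d s hs Y hY S hSY hgen
end
end

section
/- Let Z ⊂ ℙ_n be a set of ℓ points in general linear position with ℓ ≥ n+3. Then Z is contained in some Kronecker–Weierstrass variety of ℙ_n if and only if Z is contained in a rational normal curve of degree n in ℙ_n. -/
noncomputable section

open scoped BigOperators

/-- At most `finrank V` points of a set in general linear position can lie in the
projectivization of a subspace `V` with `finrank V ≤ n`. -/
lemma card_le_finrank (k : Type*) [Field k] {n : ℕ}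
    {Z : Set (Projectivization k (Fin (n + 1) → k))}
    (hgen : InGenLinPos k n Z) (V : Submodule k (Fin (n + 1) → k))
    (hV : Module.finrank k V ≤ n) :
    (Z ∩ projSet k V).ncard ≤ Module.finrank k V := by
  by_contra h
  push_neg at h
  obtain ⟨T, hTsub, hTcard⟩ :=
    Set.exists_subset_card_eq (n := Module.finrank k V + 1) h
  have hTfin : T.Finite := by
    rcases T.finite_or_infinite with h' | h'
    · exact h'
    · simp [h'.ncard] at hTcard
  haveI := hTfin.fintype
  have hcardT : Fintype.card T = Module.finrank k V + 1 := by
    rw [Set.ncard_eq_toFinset_card' T, Set.toFinset_card] at hTcard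
    exact hTcard
  let e : Fin (Module.finrank k V + 1) ≃ T := (Fintype.equivFinOfCardEq hcardT).symm
  have hli := hgen (Module.finrank k V + 1) (fun i => (e i).1) (by omega)
    (fun i j hij => e.injective (Subtype.ext hij))
    (fun i => (hTsub (e i).2).1)
  have hmem : ∀ i, ((e i).1).rep ∈ V := fun i => (hTsub (e i).2).2
  have hli' : LinearIndependent k fun i => (⟨((e i).1).rep, hmem i⟩ : V) := by
    apply LinearIndependent.of_comp V.subtype
    exact hli
  have := hli'.fintype_card_le_finrank
  simp only [Fintype.card_fin] at this
  omega

/-- Dimension bound for the sum of two subspaces sharing a nonzero vector. -/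
lemma finrank_sup_succ_le {k : Type*} [Field k] {n : ℕ}
    (U W : Submodule k (Fin (n + 1) → k)) (v : Fin (n + 1) → k) (hv : v ≠ 0)
    (hU : v ∈ U) (hW : v ∈ W) :
    Module.finrank k ↥(U ⊔ W) + 1 ≤ Module.finrank k U + Module.finrank k W := by
  have heq := Submodule.finrank_sup_add_finrank_inf_eq U W
  have hpos : 0 < Module.finrank k ↥(U ⊓ W) := by
    rw [Module.finrank_pos_iff]
    exact nontrivial_of_ne ⟨v, hU, hW⟩ 0 (fun h => hv (congrArg Subtype.val h))
  omega

/-- Dimension bound for a subspace `L` summed with a family of subspaces `W j`, each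
of which shares a nonzero vector with `L`. -/
lemma finrank_sup_finset_le {k : Type*} [Field k] {n s : ℕ}
    (L : Submodule k (Fin (n + 1) → k)) (W : Fin s → Submodule k (Fin (n + 1) → k))
    (nn : Fin s → ℕ) (hW : ∀ j, Module.finrank k (W j) = nn j + 1)
    (p : Fin s → Projectivization k (Fin (n + 1) → k))
    (hpL : ∀ j, (p j).rep ∈ L) (hpW : ∀ j, (p j).rep ∈ W j)
    (F : Finset (Fin s)) :
    Module.finrank k ↥(L ⊔ F.sup W) ≤ Module.finrank k L + ∑ j ∈ F, nn j := by
  classical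
  induction F using Finset.induction_on with
  | empty =>
    rw [Finset.sup_empty, sup_bot_eq L]
    simp
  | @insert a F ha ih =>
    rw [Finset.sup_insert, sup_left_comm, Finset.sum_insert ha]
    have hb := finrank_sup_succ_le (W a) (L ⊔ F.sup W) (p a).rep
      (Projectivization.rep_nonzero _) (hpW a) (Submodule.mem_sup_left (hpL a))
    have := hW a
    omega

/-- The projective line over a one-dimensional space is a single point. -/
lemma proj_one_eq (k : Type*) [Field k] (x y : Projectivization k (Fin 1 → k)) :
    x = y := by
  have hx := Projectivization.rep_nonzero x
  have hy := Projectivization.rep_nonzero y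
  have hx0 : x.rep 0 ≠ 0 := by
    intro h; apply hx; funext i; rw [Subsingleton.elim i 0]; simp [h]
  have hy0 : y.rep 0 ≠ 0 := by
    intro h; apply hy; funext i; rw [Subsingleton.elim i 0]; simp [h]
  rw [← Projectivization.mk_rep x, ← Projectivization.mk_rep y,
    Projectivization.mk_eq_mk_iff]
  refine ⟨Units.mk0 (x.rep 0 / y.rep 0) (div_ne_zero hx0 hy0), ?_⟩
  funext i
  rw [Subsingleton.elim i 0]
  show (x.rep 0 / y.rep 0) * y.rep 0 = x.rep 0
  field_simp

/-- Let `Z ⊂ ℙ_n` be a set of `ℓ` points in general linear position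
with `ℓ ≥ n + 3`. Then `Z` is contained in some Kronecker–Weierstrass variety of
`ℙ_n` if and only if `Z` is contained in a rational normal curve of degree `n`
in `ℙ_n`. -/
theorem statement7 (k : Type*) [Field k] [IsAlgClosed k] (n ℓ : ℕ) (hℓ : n + 3 ≤ ℓ)
    (Z : Set (Projectivization k (Fin (n + 1) → k))) (hfin : Z.Finite)
    (hcard : Z.ncard = ℓ) (hgen : InGenLinPos k n Z) :
    (∃ (d s : ℕ) (Y : Set (Projectivization k (Fin (n + 1) → k))), Z ⊆ Y ∧
        ((∃ C, IsKWpos k n d s Y C) ∨ (d = 0 ∧ ∃ y, IsKW0 k n s Y y))) ↔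
    (∃ (C : Set (Projectivization k (Fin (n + 1) → k)))
        (L : Submodule k (Fin (n + 1) → k)), IsRNC k n n C L ∧ Z ⊆ C) := by
  classical
  constructor
  · rintro ⟨d, s, Y, hZY, hcase⟩
    rcases hcase with ⟨C, hd, nn, L, W, hnn, hsum, hRNC, hdim, hint, hdisj, hYeq⟩ |
      ⟨hd0, y, nn, W, hnn, hsum, hdim, hy, hpair, hYeq⟩
    · -- positive-degree KW variety
      rcases Nat.eq_zero_or_pos s with hs | hs
      · -- s = 0 : Y is just the curve, which must have degree n
        subst hs
        have hsum0 : (∑ i : Fin 0, nn i) = 0 := by simp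
        have hdn : d = n := by omega
        subst hdn
        refine ⟨C, L, hRNC, ?_⟩
        intro z hz
        have hzY := hZY hz
        rw [hYeq] at hzY
        rcases hzY with h | h
        · exact h
        · obtain ⟨j, _⟩ := Set.mem_iUnion.mp h
          exact j.elim0
      · -- s ≥ 1 : contradiction with the number of points
        exfalso
        obtain ⟨A, hAinj, hLA, hCeq⟩ := hRNC
        have hp : ∀ j, ∃ p : Projectivization k (Fin (n + 1) → k),
            p.rep ∈ L ∧ p.rep ∈ W j := by
          intro j
          obtain ⟨p, _, hpeq⟩ := hint j
          have hmem : p ∈ projSet k L ∩ projSet k (W j) := by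
            rw [hpeq]; rfl
          exact ⟨p, hmem.1, hmem.2⟩
        choose p hpL hpW using hp
        set i : Fin s := ⟨0, hs⟩ with hi
        set F := Finset.univ.erase i with hF
        have hrankL : Module.finrank k L = d + 1 := by
          rw [hLA, LinearMap.finrank_range_of_inj hAinj]
          simp
        have hrankV : Module.finrank k ↥(L ⊔ F.sup W) ≤ d + 1 + ∑ j ∈ F, nn j := by
          have := finrank_sup_finset_le L W nn hdim p hpL hpW F
          omega
        have hsplit : (∑ j ∈ F, nn j) + nn i = ∑ j, nn j :=
          Finset.sum_erase_add Finset.univ nn (Finset.mem_univ i)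
        have hni := hnn i
        have hVn : Module.finrank k ↥(L ⊔ F.sup W) ≤ n := by omega
        have c1 := card_le_finrank k hgen (L ⊔ F.sup W) hVn
        have hWin : Module.finrank k (W i) ≤ n := by
          rw [hdim i]; omega
        have c2 := card_le_finrank k hgen (W i) hWin
        rw [hdim i] at c2
        have hcov : Z ⊆ (Z ∩ projSet k (L ⊔ F.sup W)) ∪ (Z ∩ projSet k (W i)) := by
          intro z hz
          have hzY := hZY hz
          rw [hYeq] at hzY
          rcases hzY with hzC | hzU
          · left
            refine ⟨hz, ?_⟩
            rw [hCeq] at hzC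
            obtain ⟨a, b, c, hc, hceq⟩ := hzC
            have hzL : z.rep ∈ L := by
              have hzr : z.rep = c⁻¹ • (c • z.rep) := by
                rw [smul_smul, inv_mul_cancel₀ hc, one_smul]
              rw [hLA, hzr, hceq]
              exact Submodule.smul_mem _ _ ⟨_, rfl⟩
            exact Submodule.mem_sup_left hzL
          · obtain ⟨j, hj⟩ := Set.mem_iUnion.mp hzU
            by_cases hji : j = i
            · right; exact ⟨hz, hji ▸ hj⟩
            · left
              refine ⟨hz, ?_⟩
              have hWle : W j ≤ L ⊔ F.sup W :=
                le_trans (Finset.le_sup (Finset.mem_erase.mpr ⟨hji, Finset.mem_univ j⟩))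
                  le_sup_right
              exact hWle hj
        have h1 : Z.ncard ≤ (Z ∩ projSet k (L ⊔ F.sup W)).ncard + (Z ∩ projSet k (W i)).ncard :=
          le_trans
            (Set.ncard_le_ncard hcov
              ((hfin.inter_of_left _).union (hfin.inter_of_left _)))
            (Set.ncard_union_le _ _)
        omega
    · -- degree-zero KW variety
      exfalso
      rcases Nat.eq_zero_or_pos s with hs | hs
      · subst hs
        have hZempty : Z = ∅ := by
          apply Set.eq_empty_iff_forall_notMem.mpr
          intro z hz
          have hzY := hZY hz
          rw [hYeq] at hzY
          obtain ⟨j, _⟩ := Set.mem_iUnion.mp hzY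
          exact j.elim0
        rw [hZempty, Set.ncard_empty] at hcard
        omega
      · set i : Fin s := ⟨0, hs⟩ with hi
        set yL := Submodule.span k {y.rep} with hyL
        set F := Finset.univ.erase i with hF
        have hrankyL : Module.finrank k yL = 1 :=
          finrank_span_singleton (Projectivization.rep_nonzero y)
        have hrankV : Module.finrank k ↥(yL ⊔ F.sup W) ≤ 1 + ∑ j ∈ F, nn j := by
          have := finrank_sup_finset_le yL W nn hdim (fun _ => y)
            (fun _ => Submodule.mem_span_singleton_self _) (fun j => hy j) F
          omega
        have hsplit : (∑ j ∈ F, nn j) + nn i = ∑ j, nn j :=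
          Finset.sum_erase_add Finset.univ nn (Finset.mem_univ i)
        have hni := hnn i
        have hVn : Module.finrank k ↥(yL ⊔ F.sup W) ≤ n := by omega
        have c1 := card_le_finrank k hgen (yL ⊔ F.sup W) hVn
        have hWin : Module.finrank k (W i) ≤ n := by
          rw [hdim i]; omega
        have c2 := card_le_finrank k hgen (W i) hWin
        rw [hdim i] at c2
        have hcov : Z ⊆ (Z ∩ projSet k (yL ⊔ F.sup W)) ∪ (Z ∩ projSet k (W i)) := by
          intro z hz
          have hzY := hZY hz
          rw [hYeq] at hzY
          obtain ⟨j, hj⟩ := Set.mem_iUnion.mp hzY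
          by_cases hji : j = i
          · right; exact ⟨hz, hji ▸ hj⟩
          · left
            refine ⟨hz, ?_⟩
            have hWle : W j ≤ yL ⊔ F.sup W :=
              le_trans (Finset.le_sup (Finset.mem_erase.mpr ⟨hji, Finset.mem_univ j⟩))
                le_sup_right
            exact hWle hj
        have h1 : Z.ncard ≤ (Z ∩ projSet k (yL ⊔ F.sup W)).ncard + (Z ∩ projSet k (W i)).ncard :=
          le_trans
            (Set.ncard_le_ncard hcov
              ((hfin.inter_of_left _).union (hfin.inter_of_left _)))
            (Set.ncard_union_le _ _)
        omega
  · rintro ⟨C, L, hRNC, hZC⟩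
    rcases Nat.eq_zero_or_pos n with hn | hn
    · exfalso
      subst hn
      rcases Z.eq_empty_or_nonempty with hZ | ⟨x, hx⟩
      · rw [hZ, Set.ncard_empty] at hcard; omega
      · have hZx : Z ⊆ {x} := fun z _ => proj_one_eq k z x
        have : Z.ncard ≤ ({x} : Set _).ncard :=
          Set.ncard_le_ncard hZx (Set.finite_singleton x)
        rw [Set.ncard_singleton] at this
        omega
    · refine ⟨n, 0, C, hZC, Or.inl ⟨C, hn, Fin.elim0, L, Fin.elim0,
        fun i => i.elim0, by simp, hRNC, fun i => i.elim0, fun i => i.elim0,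
        fun i => i.elim0, ?_⟩⟩
      rw [Set.iUnion_of_empty, Set.union_empty]
end
end
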